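/- arXiv:1302.3726 — 7 statements merged into one kernel-verified Lean document; each statement's English description precedes it below -/
import Mathlib

section
/- For any integers $k, z$ with $0 < z < k$, we have $((k-z)/k)^{k-z} > 4^{-z}$. -/
/-! With `n = k - z`, the reciprocal of the right-hand side is `(1 + z / n) ^ n ≤ e ^ z`,
and `e ^ z < 4 ^ z` since `e < 4`. -/

open Real

theorem exp_neg_le_div_add_pow {n : ℕ} (hn : n ≠ 0) {t : ℝ} (ht : 0 ≤ t) :
    exp (-t) ≤ ((n : ℝ) / (n + t)) ^ n := by
  have hn' : (0 : ℝ) < n := by positivity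
  have hbound : (1 + t / n) ^ n ≤ exp t := by
    simpa [neg_div, sub_neg_eq_add] using
      one_sub_div_pow_le_exp_neg (n := n) (t := -t) (by linarith)
  have hinv : (n : ℝ) / (n + t) = (1 + t / n)⁻¹ := by
    rw [one_add_div hn'.ne', inv_div]
  rw [hinv, inv_pow, exp_neg]
  exact inv_anti₀ (by positivity) hbound

theorem exp_lt_four_pow {m : ℕ} (hm : m ≠ 0) : exp m < 4 ^ m := by
  rw [← exp_one_pow]
  exact pow_lt_pow_left₀ (exp_one_lt_three.trans (by norm_num)) (exp_pos 1).le hm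

theorem stmt1 (k z : ℤ) (h0 : 0 < z) (h1 : z < k) :
    (4 : ℚ) ^ (-z) < ((k - z : ℚ) / (k : ℚ)) ^ (k - z) := by
  obtain ⟨m, rfl⟩ : ∃ m : ℕ, z = m := ⟨z.toNat, (Int.toNat_of_nonneg h0.le).symm⟩
  obtain ⟨n, rfl⟩ : ∃ n : ℕ, k = n + m := ⟨(k - m).toNat, by omega⟩
  have hm : m ≠ 0 := by omega
  have hn : n ≠ 0 := by omega
  rw [← Rat.cast_lt (K := ℝ)]
  push_cast
  simp only [add_sub_cancel_right, zpow_neg, zpow_natCast]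
  calc ((4 : ℝ) ^ m)⁻¹ < (exp m)⁻¹ := inv_strictAnti₀ (exp_pos _) (exp_lt_four_pow hm)
    _ = exp (-m) := (exp_neg _).symm
    _ ≤ ((n : ℝ) / (n + m)) ^ n := exp_neg_le_div_add_pow hn m.cast_nonneg
end

section
/- Let $U$ be a finite set of size $n$, let $g_1, g_2 : \mathcal{P}(U) \to \mathbb{R}$, and for disjoint-sized parameters define $s_{A,u}(g) = \sum_{B \subseteq U,\ |B| = u,\ A \cap B = \emptyset} \hat{g}_{A \cup B}$ and $s_{B,u_1,u_2}(g_1,g_2) = \sum_{B_1, C \subseteq U,\ |B_1|=u_1,\ |C|=u_2,\ B \cap B_1 = B \cap C = B_1 \cap C = \emptyset} \hat{g_1}_{B \cup B_1}\hat{g_2}_{B \cup C}$. Then for all $A \subseteq U$ and all $u_1, u_2 \ge 0$: $s_{A,u_1}(g_1)\, s_{A,u_2}(g_2) = \sum_{u \ge 0} \sum_{A \subseteq B \subseteq U,\ |B| = |A| + u} s_{B,\,u_1-u,\,u_2-u}(g_1,g_2)$. -/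
open Finset

noncomputable def eV {U : Type*} [DecidableEq U] (S C : Finset U) : ℝ :=
  (-1) ^ (S ∩ C).card

noncomputable def ip {U : Type*} [Fintype U] [DecidableEq U] (f g : Finset U → ℝ) : ℝ :=
  ((2 : ℝ) ^ Fintype.card U)⁻¹ * ∑ C : Finset U, f C * g C

/-- The Fourier coefficient `ĝ_V = g ⬝ e_V`. -/
noncomputable def hatC {U : Type*} [Fintype U] [DecidableEq U] (g : Finset U → ℝ)
    (S : Finset U) : ℝ :=
  ip g (eV S)

/-- `s_{A,u}(g) = ∑_{B : |B| = u, A ∩ B = ∅} ĝ_{A ∪ B}`. -/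
noncomputable def sA {U : Type*} [Fintype U] [DecidableEq U] (g : Finset U → ℝ)
    (A : Finset U) (u : ℕ) : ℝ :=
  ∑ B ∈ univ.filter (fun B : Finset U => B.card = u ∧ Disjoint A B), hatC g (A ∪ B)

/-- `s_{B,u₁,u₂}(g₁,g₂) = ∑_{B₁,C pairwise disjoint from B and each other,
|B₁| = u₁, |C| = u₂} ĝ₁_{B ∪ B₁} ĝ₂_{B ∪ C}`. -/
noncomputable def sSet {U : Type*} [Fintype U] [DecidableEq U] (g₁ g₂ : Finset U → ℝ)
    (B : Finset U) (u₁ u₂ : ℕ) : ℝ :=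
  ∑ B₁ : Finset U, ∑ C : Finset U,
    if B₁.card = u₁ ∧ C.card = u₂ ∧ Disjoint B B₁ ∧ Disjoint B C ∧ Disjoint B₁ C then
      hatC g₁ (B ∪ B₁) * hatC g₂ (B ∪ C)
    else 0

/-!
Expanding the product gives a sum of `ĝ₁_{A ∪ B₁} ĝ₂_{A ∪ B₂}` over pairs `(B₁, B₂)` of sets
disjoint from `A`. Such a pair is the same as its overlap `D = B₁ ∩ B₂` together with the
remainders `B₁ \ B₂` and `B₂ \ B₁`, three pairwise disjoint sets; with `B = A ∪ D` and
`u = |D| ≤ min u₁ u₂` this is exactly a summand of the right-hand side. The identity is thus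
a bijection of index sets and holds for arbitrary coefficients in place of `ĝ₁, ĝ₂`.
-/

section OverlapDecomposition

variable {α : Type*} [DecidableEq α]

theorem inter_union_sdiff_eq (s t : Finset α) : s ∩ t ∪ s \ t = s := by
  rw [union_comm, sdiff_union_inter]

theorem union_inter_union_eq_of_disjoint (s : Finset α) {t₁ t₂ : Finset α}
    (h : Disjoint t₁ t₂) : (s ∪ t₁) ∩ (s ∪ t₂) = s := by
  rw [← union_inter_distrib_left, disjoint_iff_inter_eq_empty.mp h, union_empty]

theorem union_sdiff_union_eq_of_disjoint {s t₁ t₂ : Finset α} (hs : Disjoint s t₁)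
    (ht : Disjoint t₁ t₂) : (s ∪ t₁) \ (s ∪ t₂) = t₁ := by
  rw [union_sdiff_distrib, sdiff_eq_empty_iff_subset.mpr subset_union_left, empty_union,
    sdiff_eq_self_of_disjoint (disjoint_union_right.mpr ⟨hs.symm, ht⟩)]

theorem disjoint_union_inter_sdiff {A s : Finset α} (hA : Disjoint A s) (t : Finset α) :
    Disjoint (A ∪ s ∩ t) (s \ t) :=
  disjoint_union_left.mpr
    ⟨hA.mono_right sdiff_subset, disjoint_sdiff.mono_left inter_subset_right⟩

theorem card_sdiff_union_of_subset {A B C : Finset α} {u v : ℕ} (hAB : A ⊆ B)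
    (hB : #B = #A + u) (hC : #C = v - u) (huv : u ≤ v) (hBC : Disjoint B C) :
    #(B \ A ∪ C) = v := by
  rw [card_union_of_disjoint (hBC.mono_left sdiff_subset), card_sdiff_of_subset hAB]
  omega

theorem disjoint_sdiff_union_of_subset {A B C : Finset α} (hAB : A ⊆ B) (hBC : Disjoint B C) :
    Disjoint A (B \ A ∪ C) :=
  disjoint_union_right.mpr ⟨disjoint_sdiff, hBC.mono_left hAB⟩

variable [Fintype α]

theorem sum_pairs_eq_sum_overlap {M : Type*} [AddCommMonoid M]
    (F : Finset α → Finset α → M) (A : Finset α) (u₁ u₂ : ℕ) :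
    ∑ p ∈ (univ.filter fun B => #B = u₁ ∧ Disjoint A B) ×ˢ
        (univ.filter fun B => #B = u₂ ∧ Disjoint A B), F (A ∪ p.1) (A ∪ p.2) =
      ∑ u ∈ range (min u₁ u₂ + 1), ∑ B ∈ univ.filter (fun B => A ⊆ B ∧ #B = #A + u),
        ∑ p ∈ (univ ×ˢ univ).filter (fun p : Finset α × Finset α => #p.1 = u₁ - u ∧
          #p.2 = u₂ - u ∧ Disjoint B p.1 ∧ Disjoint B p.2 ∧ Disjoint p.1 p.2),
          F (B ∪ p.1) (B ∪ p.2) := by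
  simp only [sum_sigma']
  refine sum_nbij' (fun p => ⟨#(p.1 ∩ p.2), A ∪ p.1 ∩ p.2, p.1 \ p.2, p.2 \ p.1⟩)
    (fun q => (q.2.1 \ A ∪ q.2.2.1, q.2.1 \ A ∪ q.2.2.2)) ?_ ?_ ?_ ?_ ?_
  · rintro ⟨B₁, B₂⟩ hp
    simp only [mem_product, mem_filter, mem_univ, true_and] at hp
    obtain ⟨⟨rfl, hA₁⟩, rfl, hA₂⟩ := hp
    simp only [mem_sigma, mem_filter, mem_product, mem_range, mem_univ, true_and]
    refine ⟨Nat.lt_succ_of_le (le_min (card_le_card inter_subset_left)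
        (card_le_card inter_subset_right)),
      ⟨subset_union_left, card_union_of_disjoint (hA₁.mono_right inter_subset_left)⟩,
      by rw [card_sdiff, inter_comm], card_sdiff, disjoint_union_inter_sdiff hA₁ _,
      by rw [inter_comm]; exact disjoint_union_inter_sdiff hA₂ _, disjoint_sdiff_sdiff⟩
  · rintro ⟨u, B, C₁, C₂⟩ hq
    simp only [mem_sigma, mem_filter, mem_product, mem_range, mem_univ, true_and] at hq
    obtain ⟨hu, ⟨hAB, hB⟩, hC₁, hC₂, hBC₁, hBC₂, -⟩ := hq
    have hu' := Nat.le_of_lt_succ hu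
    simp only [mem_product, mem_filter, mem_univ, true_and]
    exact ⟨⟨card_sdiff_union_of_subset hAB hB hC₁ (hu'.trans (min_le_left _ _)) hBC₁,
      disjoint_sdiff_union_of_subset hAB hBC₁⟩,
      card_sdiff_union_of_subset hAB hB hC₂ (hu'.trans (min_le_right _ _)) hBC₂,
      disjoint_sdiff_union_of_subset hAB hBC₂⟩
  · rintro ⟨B₁, B₂⟩ hp
    simp only [mem_product, mem_filter, mem_univ, true_and] at hp
    rw [union_sdiff_cancel_left (hp.1.2.mono_right inter_subset_left), inter_union_sdiff_eq,
      inter_comm, inter_union_sdiff_eq]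
  · rintro ⟨u, B, C₁, C₂⟩ hq
    simp only [mem_sigma, mem_filter, mem_product, mem_range, mem_univ, true_and] at hq
    obtain ⟨-, ⟨hAB, hB⟩, -, -, hBC₁, hBC₂, hC₁C₂⟩ := hq
    rw [union_inter_union_eq_of_disjoint _ hC₁C₂, union_sdiff_of_subset hAB,
      card_sdiff_of_subset hAB, hB, Nat.add_sub_cancel_left,
      union_sdiff_union_eq_of_disjoint (hBC₁.mono_left sdiff_subset) hC₁C₂,
      union_sdiff_union_eq_of_disjoint (hBC₂.mono_left sdiff_subset) hC₁C₂.symm]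
  · rintro ⟨B₁, B₂⟩ -
    rw [union_assoc, inter_union_sdiff_eq, union_assoc, inter_comm, inter_union_sdiff_eq]

end OverlapDecomposition

theorem sSet_eq_sum_filter {U : Type*} [Fintype U] [DecidableEq U] (g₁ g₂ : Finset U → ℝ)
    (B : Finset U) (v₁ v₂ : ℕ) :
    sSet g₁ g₂ B v₁ v₂ = ∑ p ∈ (univ ×ˢ univ).filter (fun p : Finset U × Finset U =>
      #p.1 = v₁ ∧ #p.2 = v₂ ∧ Disjoint B p.1 ∧ Disjoint B p.2 ∧ Disjoint p.1 p.2),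
        hatC g₁ (B ∪ p.1) * hatC g₂ (B ∪ p.2) := by
  rw [sum_filter, sum_product, sSet]

/-- `s_{A,u₁}(g₁) s_{A,u₂}(g₂) = ∑_{u ≥ 0} ∑_{A ⊆ B, |B| = |A| + u} s_{B,u₁-u,u₂-u}(g₁,g₂)`
(terms with a negative index vanish, so the sum over `u` runs up to `min u₁ u₂`). -/
theorem stmt9 {U : Type*} [Fintype U] [DecidableEq U] (g₁ g₂ : Finset U → ℝ)
    (A : Finset U) (u₁ u₂ : ℕ) :
    sA g₁ A u₁ * sA g₂ A u₂ =
      ∑ u ∈ Finset.range (min u₁ u₂ + 1),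
        ∑ B ∈ univ.filter (fun B : Finset U => A ⊆ B ∧ B.card = A.card + u),
          sSet g₁ g₂ B (u₁ - u) (u₂ - u) := by
  rw [sA, sA, sum_mul_sum, ← sum_product',
    sum_pairs_eq_sum_overlap (fun B₁ B₂ => hatC g₁ B₁ * hatC g₂ B₂)]
  simp only [sSet_eq_sum_filter]
end

section
/- With the notation $s_{k,u_1,u_2}(g_1,g_2) = \sum_{A,B,C \subseteq U,\ |A|=k,\ |B|=u_1,\ |C|=u_2,\ A,B,C\ \text{pairwise disjoint}} \hat{g_1}_{A\cup B}\hat{g_2}_{A\cup C}$ and $s_{A,u}(g) = \sum_{B \subseteq U,\ |B|=u,\ A\cap B=\emptyset} \hat{g}_{A\cup B}$, summing the single-set product identity over all $A$ of size $k$ yields: $\sum_{A : |A|=k} s_{A,u_1}(g_1) s_{A,u_2}(g_2) = \sum_{u \ge 0} \binom{k+u}{u} s_{k+u,\,u_1-u,\,u_2-u}(g_1,g_2)$. -/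
open Finset

/-- `s_{k,u₁,u₂}(g₁,g₂) = ∑_{A : |A| = k} s_{A,u₁,u₂}(g₁,g₂)`. -/
noncomputable def sK {U : Type*} [Fintype U] [DecidableEq U] (g₁ g₂ : Finset U → ℝ)
    (k u₁ u₂ : ℕ) : ℝ :=
  ∑ A ∈ univ.filter (fun A : Finset U => A.card = k), sSet g₁ g₂ A u₁ u₂

/-!
Both sides are sums of `ĝ₁ X * ĝ₂ Y` over pairs `(X, Y)`. On the left, with `X = A ∪ B` and
`Y = A ∪ C`, each pair with `|X| = k + u₁`, `|Y| = k + u₂` is produced once for every `k`-subset `A`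
of `X ∩ Y`, i.e. `C(|X ∩ Y|, k)` times. On the right, a pairwise disjoint triple `(A, B, C)` is
recovered from `(A ∪ B, A ∪ C)` as `(X ∩ Y, X \ Y, Y \ X)`, so `s_{k+u, u₁-u, u₂-u}` collects
exactly the pairs with `|X ∩ Y| = k + u`, for which `C(k + u, u) = C(|X ∩ Y|, k)`.
-/

theorem Finset.union_inter_union_of_disjoint {α : Type*} [DecidableEq α] {B C : Finset α}
    (A : Finset α) (hBC : Disjoint B C) : (A ∪ B) ∩ (A ∪ C) = A := by
  rw [← union_inter_distrib_left, disjoint_iff_inter_eq_empty.mp hBC, union_empty]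

theorem Finset.union_sdiff_union_of_disjoint {α : Type*} [DecidableEq α] {A B C : Finset α}
    (hAB : Disjoint A B) (hBC : Disjoint B C) : (A ∪ B) \ (A ∪ C) = B := by
  rw [disjoint_left] at hAB hBC
  ext x
  simp only [mem_sdiff, mem_union]
  grind

section Reindex

variable {α R : Type*} [Fintype α] [DecidableEq α]

theorem sum_disjoint_union_eq_sum_superset [AddCommMonoid R] (f : Finset α → R)
    (A : Finset α) (u : ℕ) :
    ∑ B ∈ univ.filter (fun B : Finset α => B.card = u ∧ Disjoint A B), f (A ∪ B) =
      ∑ X ∈ univ.filter (fun X : Finset α => A ⊆ X ∧ X.card = A.card + u), f X := by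
  refine sum_nbij' (A ∪ ·) (· \ A) ?_ ?_ ?_ ?_ (fun _ _ => rfl)
  · intro B hB
    simp only [mem_filter, mem_univ, true_and] at hB ⊢
    exact ⟨subset_union_left, by rw [card_union_of_disjoint hB.2, hB.1]⟩
  · intro X hX
    simp only [mem_filter, mem_univ, true_and] at hX ⊢
    exact ⟨by rw [card_sdiff_of_subset hX.1]; omega, disjoint_sdiff⟩
  · intro B hB
    simp only [mem_filter, mem_univ, true_and] at hB
    exact union_sdiff_cancel_left hB.2
  · intro X hX
    simp only [mem_filter, mem_univ, true_and] at hX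
    exact union_sdiff_of_subset hX.1

theorem sum_mul_sum_superset_eq_sum_choose [CommSemiring R] (f g : Finset α → R)
    (k u₁ u₂ : ℕ) :
    ∑ A ∈ univ.filter (fun A : Finset α => A.card = k),
        (∑ X ∈ univ.filter (fun X : Finset α => A ⊆ X ∧ X.card = k + u₁), f X) *
          ∑ Y ∈ univ.filter (fun Y : Finset α => A ⊆ Y ∧ Y.card = k + u₂), g Y =
      ∑ X, ∑ Y, if X.card = k + u₁ ∧ Y.card = k + u₂ then
        ((X ∩ Y).card.choose k : R) * (f X * g Y) else 0 := by
  rw [← Fintype.sum_prod_type', ← sum_filter]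
  simp_rw [sum_mul_sum, ← sum_product']
  rw [sum_comm' (t' := univ.filter fun p : Finset α × Finset α =>
      p.1.card = k + u₁ ∧ p.2.card = k + u₂) (s' := fun p => powersetCard k (p.1 ∩ p.2))]
  · simp_rw [sum_const, card_powersetCard, nsmul_eq_mul]
  · intro A p
    simp only [mem_filter, mem_univ, true_and, mem_product, mem_powersetCard, subset_inter_iff]
    tauto

theorem sum_pairwise_disjoint_eq_sum_inter [AddCommMonoid R] (F : Finset α → Finset α → R)
    (m v₁ v₂ : ℕ) :
    ∑ A ∈ univ.filter (fun A : Finset α => A.card = m), ∑ B : Finset α, ∑ C : Finset α,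
        (if B.card = v₁ ∧ C.card = v₂ ∧ Disjoint A B ∧ Disjoint A C ∧ Disjoint B C then
          F (A ∪ B) (A ∪ C) else 0) =
      ∑ X : Finset α, ∑ Y : Finset α,
        if (X ∩ Y).card = m ∧ X.card = m + v₁ ∧ Y.card = m + v₂ then F X Y else 0 := by
  calc _ = ∑ t ∈ univ.filter (fun t : Finset α × Finset α × Finset α =>
          t.1.card = m ∧ t.2.1.card = v₁ ∧ t.2.2.card = v₂ ∧
            Disjoint t.1 t.2.1 ∧ Disjoint t.1 t.2.2 ∧ Disjoint t.2.1 t.2.2),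
          F (t.1 ∪ t.2.1) (t.1 ∪ t.2.2) := by
        simp only [sum_filter, Fintype.sum_prod_type, ite_sum_zero, ← ite_and]
    _ = ∑ p ∈ univ.filter (fun p : Finset α × Finset α =>
          (p.1 ∩ p.2).card = m ∧ p.1.card = m + v₁ ∧ p.2.card = m + v₂), F p.1 p.2 := by
        refine sum_nbij' (fun t => (t.1 ∪ t.2.1, t.1 ∪ t.2.2))
          (fun p => (p.1 ∩ p.2, p.1 \ p.2, p.2 \ p.1)) ?_ ?_ ?_ ?_ (fun _ _ => rfl)
        · rintro ⟨A, B, C⟩ ht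
          simp only [mem_filter, mem_univ, true_and] at ht ⊢
          obtain ⟨hA, hB, hC, hAB, hAC, hBC⟩ := ht
          rw [union_inter_union_of_disjoint A hBC, card_union_of_disjoint hAB,
            card_union_of_disjoint hAC]
          omega
        · rintro ⟨X, Y⟩ hp
          simp only [mem_filter, mem_univ, true_and] at hp ⊢
          have hX := card_inter_add_card_sdiff X Y
          have hY := card_inter_add_card_sdiff Y X
          rw [inter_comm] at hY
          refine ⟨hp.1, by omega, by omega, (disjoint_sdiff_inter X Y).symm, ?_,
            disjoint_sdiff_sdiff⟩
          rw [inter_comm]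
          exact (disjoint_sdiff_inter Y X).symm
        · rintro ⟨A, B, C⟩ ht
          simp only [mem_filter, mem_univ, true_and] at ht
          obtain ⟨-, -, -, hAB, hAC, hBC⟩ := ht
          simp only [union_inter_union_of_disjoint A hBC, union_sdiff_union_of_disjoint hAB hBC,
            union_sdiff_union_of_disjoint hAC hBC.symm]
        · rintro ⟨X, Y⟩ -
          simp only [Prod.mk.injEq]
          rw [union_comm, sdiff_union_inter, inter_comm, union_comm, sdiff_union_inter]
          exact ⟨rfl, rfl⟩
    _ = _ := by rw [sum_filter, Fintype.sum_prod_type]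

end Reindex

theorem sum_range_choose_mul_ite {R : Type*} [Semiring R] (c : R) {k u₁ u₂ i a b : ℕ}
    (hia : i ≤ a) (hib : i ≤ b) :
    ∑ u ∈ range (min u₁ u₂ + 1), ((k + u).choose u : R) *
        (if i = k + u ∧ a = k + u + (u₁ - u) ∧ b = k + u + (u₂ - u) then c else 0) =
      if a = k + u₁ ∧ b = k + u₂ then (i.choose k : R) * c else 0 := by
  have hterm : ∀ u ∈ range (min u₁ u₂ + 1), ((k + u).choose u : R) *
      (if i = k + u ∧ a = k + u + (u₁ - u) ∧ b = k + u + (u₂ - u) then c else 0) =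
        if i = k + u then (if a = k + u₁ ∧ b = k + u₂ then (i.choose k : R) * c else 0)
        else 0 := by
    intro u hu
    rw [mem_range] at hu
    by_cases hi : i = k + u
    · have hsizes :
          (a = k + u + (u₁ - u) ∧ b = k + u + (u₂ - u)) ↔ (a = k + u₁ ∧ b = k + u₂) := by
        omega
      simp only [hi, true_and, if_true, hsizes, mul_ite, mul_zero]
      rw [Nat.choose_symm_add]
    · simp only [hi, false_and, if_false, mul_zero]
  rw [sum_congr rfl hterm]
  by_cases hik : k ≤ i
  · obtain ⟨d, rfl⟩ := Nat.exists_eq_add_of_le hik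
    simp only [add_right_inj, sum_ite_eq, mem_range]
    split_ifs <;> first | rfl | omega
  · simp [Nat.choose_eq_zero_of_lt (not_le.mp hik)]

section FourierSums

variable {U : Type*} [Fintype U] [DecidableEq U]

theorem sA_eq_sum_superset (g : Finset U → ℝ) (A : Finset U) (u : ℕ) :
    sA g A u = ∑ X ∈ univ.filter (fun X : Finset U => A ⊆ X ∧ X.card = A.card + u), hatC g X :=
  sum_disjoint_union_eq_sum_superset _ A u

theorem sK_eq_sum_inter (g₁ g₂ : Finset U → ℝ) (m v₁ v₂ : ℕ) :
    sK g₁ g₂ m v₁ v₂ = ∑ X : Finset U, ∑ Y : Finset U,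
      if (X ∩ Y).card = m ∧ X.card = m + v₁ ∧ Y.card = m + v₂ then
        hatC g₁ X * hatC g₂ Y else 0 :=
  sum_pairwise_disjoint_eq_sum_inter (fun X Y => hatC g₁ X * hatC g₂ Y) m v₁ v₂

end FourierSums

/-- Summing the single-set product identity over all `A` of size `k`:
`∑_{A : |A|=k} s_{A,u₁}(g₁) s_{A,u₂}(g₂) = ∑_{u ≥ 0} C(k+u, u) s_{k+u, u₁-u, u₂-u}(g₁,g₂)`
(terms with a negative index vanish). -/
theorem stmt10 {U : Type*} [Fintype U] [DecidableEq U] (g₁ g₂ : Finset U → ℝ)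
    (k u₁ u₂ : ℕ) :
    ∑ A ∈ univ.filter (fun A : Finset U => A.card = k), sA g₁ A u₁ * sA g₂ A u₂ =
      ∑ u ∈ Finset.range (min u₁ u₂ + 1),
        (Nat.choose (k + u) u : ℝ) * sK g₁ g₂ (k + u) (u₁ - u) (u₂ - u) := by
  calc _ = ∑ A ∈ univ.filter (fun A : Finset U => A.card = k),
          (∑ X ∈ univ.filter (fun X : Finset U => A ⊆ X ∧ X.card = k + u₁), hatC g₁ X) *
            ∑ Y ∈ univ.filter (fun Y : Finset U => A ⊆ Y ∧ Y.card = k + u₂), hatC g₂ Y :=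
        sum_congr rfl fun A hA => by
          rw [sA_eq_sum_superset, sA_eq_sum_superset, (mem_filter.mp hA).2]
    _ = ∑ X : Finset U, ∑ Y : Finset U, if X.card = k + u₁ ∧ Y.card = k + u₂ then
          ((X ∩ Y).card.choose k : ℝ) * (hatC g₁ X * hatC g₂ Y) else 0 :=
        sum_mul_sum_superset_eq_sum_choose _ _ k u₁ u₂
    _ = _ := by
        simp_rw [sK_eq_sum_inter, mul_sum]
        symm
        rw [Finset.sum_comm]
        refine sum_congr rfl fun X _ => ?_
        rw [Finset.sum_comm]
        refine sum_congr rfl fun Y _ => ?_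
        exact sum_range_choose_mul_ite _ (card_le_card inter_subset_left)
          (card_le_card inter_subset_right)
end

section
/- Inversion formula: with $s_{k,u_1,u_2}(g_1,g_2)$ and $s_{A,u}(g)$ as defined, for all $k, u_1, u_2 \ge 0$: $s_{k,u_1,u_2}(g_1,g_2) = \sum_{u \ge 0} (-1)^u \binom{k+u}{u} \sum_{A : |A| = k+u} s_{A,\,u_1-u}(g_1)\, s_{A,\,u_2-u}(g_2)$. -/
open Finset

/-! Expanding `s_{A,v₁}(g₁) s_{A,v₂}(g₂)` and grouping the pairs `(B, C)` by their overlap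
`D = B ∩ C` gives the triangular system
`∑_{|A| = m} s_{A,v₁}(g₁) s_{A,v₂}(g₂) = ∑_d C(m+d, d) s_{m+d, v₁-d, v₂-d}(g₁, g₂)`,
because every set of size `m + d` is `A ∪ D` for exactly `C(m+d, d)` choices of `D`.
The system is inverted by the identity
`∑_{u ≤ t} (-1)^u C(k+u, u) C(k+t, t-u) = C(k+t, t) ∑_{u ≤ t} (-1)^u C(t, u) = [t = 0]`. -/

theorem Nat.choose_add_mul_choose_sub {k u t : ℕ} (h : u ≤ t) :
    (k + u).choose u * (k + t).choose (t - u) = (k + t).choose t * t.choose u := by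
  obtain ⟨d, rfl⟩ := Nat.exists_eq_add_of_le h
  have key := Nat.choose_mul (n := k + u + d) (k := k + u) (s := k) (by omega)
  rw [Nat.choose_symm_add, Nat.add_sub_cancel_left, Nat.add_assoc, Nat.add_sub_cancel_left,
    Nat.choose_symm_add, Nat.choose_symm_add (a := k)] at key
  rw [Nat.add_sub_cancel_left, ← key, Nat.mul_comm]

theorem sum_range_neg_one_pow_mul_choose {R : Type*} [CommRing R] (n : ℕ) :
    ∑ m ∈ range (n + 1), (-1 : R) ^ m * n.choose m = if n = 0 then 1 else 0 := by
  exact_mod_cast congrArg (Int.cast : ℤ → R) (Int.alternating_sum_range_choose (n := n))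

theorem sum_neg_one_pow_mul_choose_mul_sum_choose {R : Type*} [CommRing R] (k n : ℕ)
    (g : ℕ → R) :
    ∑ u ∈ range (n + 1), (-1) ^ u * ((k + u).choose u : R) *
      ∑ d ∈ range (n - u + 1), ((k + u + d).choose d : R) * g (u + d) = g 0 := by
  calc _ = ∑ u ∈ range (n + 1), ∑ d ∈ range (n + 1 - u),
          (-1) ^ u * ((k + u).choose u : R) * (((k + u + d).choose d : R) * g (u + d)) := by
        refine sum_congr rfl fun u hu => ?_
        rw [mul_sum, show n - u + 1 = n + 1 - u by grind]
    _ = ∑ t ∈ range (n + 1), ∑ u ∈ range (t + 1), (-1) ^ u * ((k + u).choose u : R) *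
          (((k + u + (t - u)).choose (t - u) : R) * g (u + (t - u))) :=
        (sum_range_diag_flip _ _).symm
    _ = ∑ t ∈ range (n + 1), ((k + t).choose t *
          ∑ u ∈ range (t + 1), (-1 : R) ^ u * t.choose u) * g t := by
        refine sum_congr rfl fun t _ => ?_
        rw [mul_sum, sum_mul]
        refine sum_congr rfl fun u hu => ?_
        have hut : u ≤ t := Nat.lt_succ_iff.1 (mem_range.1 hu)
        have key : ((k + u).choose u : R) * (k + t).choose (t - u) =
            (k + t).choose t * t.choose u := by
          rw [← Nat.cast_mul, ← Nat.cast_mul, Nat.choose_add_mul_choose_sub hut]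
        rw [Nat.add_assoc, Nat.add_sub_cancel' hut]
        linear_combination (-1 : R) ^ u * g t * key
    _ = g 0 := by simp [sum_range_neg_one_pow_mul_choose]

theorem sum_filter_le_eq_sum_range {ι M : Type*} [Fintype ι] [AddCommMonoid M] (g : ι → ℕ)
    (n : ℕ) (P : ι → Prop) [DecidablePred P] (f : ℕ → ι → M) :
    ∑ i with g i ≤ n ∧ P i, f (g i) i =
      ∑ d ∈ range (n + 1), ∑ i with g i = d ∧ P i, f d i := by
  rw [← sum_fiberwise_of_maps_to (g := g) (t := range (n + 1))
    (fun i hi => mem_range_succ_iff.2 (mem_filter.1 hi).2.1)]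
  refine sum_congr rfl fun d hd => sum_congr ?_ fun i hi => by rw [(mem_filter.1 hi).2.1]
  ext i
  simp only [mem_filter, mem_univ, true_and, mem_range_succ_iff] at hd ⊢
  constructor
  · rintro ⟨⟨-, hP⟩, rfl⟩; exact ⟨rfl, hP⟩
  · rintro ⟨rfl, hP⟩; exact ⟨⟨hd, hP⟩, rfl⟩

section Finsets

variable {U M : Type*} [Fintype U] [DecidableEq U] [AddCommMonoid M]

theorem sum_sum_disjoint_union (m d : ℕ) (f : Finset U → M) :
    ∑ A with #A = m, ∑ D with #D = d ∧ Disjoint A D, f (A ∪ D) =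
      (m + d).choose d • ∑ E with #E = m + d, f E := by
  calc _ = ∑ A with #A = m, ∑ E with #E = m + d ∧ A ⊆ E, f E := by
        refine sum_congr rfl fun A hA => sum_nbij' (A ∪ ·) (· \ A) ?_ ?_ ?_ ?_ fun _ _ => rfl
        · simp only [mem_filter, mem_univ, true_and] at hA ⊢
          rintro D ⟨hD, hAD⟩
          exact ⟨by rw [card_union_of_disjoint hAD, hA, hD], subset_union_left⟩
        · simp only [mem_filter, mem_univ, true_and] at hA ⊢
          rintro E ⟨hE, hAE⟩
          rw [card_sdiff_of_subset hAE, hE, hA, Nat.add_sub_cancel_left]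
          exact ⟨rfl, disjoint_sdiff⟩
        · simp only [mem_filter, mem_univ, true_and]
          rintro D ⟨-, hAD⟩
          exact union_sdiff_cancel_left hAD
        · simp only [mem_filter, mem_univ, true_and]
          rintro E ⟨-, hAE⟩
          exact union_sdiff_of_subset hAE
    _ = ∑ E with #E = m + d, ∑ A ∈ E.powersetCard m, f E :=
        sum_comm' fun A E => by simp only [mem_filter, mem_univ, true_and, mem_powersetCard]; tauto
    _ = _ := by
        rw [smul_sum]
        refine sum_congr rfl fun E hE => ?_
        rw [sum_const, card_powersetCard, (mem_filter.1 hE).2, Nat.choose_symm_add]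

theorem sum_disjoint_pairs_eq_sum_inter (A : Finset U) (v₁ v₂ : ℕ)
    (F : Finset U → Finset U → M) :
    ∑ B with #B = v₁ ∧ Disjoint A B, ∑ C with #C = v₂ ∧ Disjoint A C, F B C =
      ∑ D with #D ≤ min v₁ v₂ ∧ Disjoint A D,
        ∑ q : Finset U × Finset U with #q.1 = v₁ - #D ∧ #q.2 = v₂ - #D ∧
          Disjoint (A ∪ D) q.1 ∧ Disjoint (A ∪ D) q.2 ∧ Disjoint q.1 q.2,
          F (D ∪ q.1) (D ∪ q.2) := by
  rw [← sum_product', ← sum_fiberwise_of_maps_to (g := fun p => p.1 ∩ p.2)]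
  · refine sum_congr rfl fun D hD => sum_nbij' (fun p => (p.1 \ D, p.2 \ D))
      (fun q => (D ∪ q.1, D ∪ q.2)) ?_ ?_ ?_ ?_ ?_
    · rintro ⟨B, C⟩ h
      simp only [mem_filter, mem_product, mem_univ, true_and] at h ⊢
      obtain ⟨⟨⟨rfl, hAB⟩, rfl, hAC⟩, rfl⟩ := h
      refine ⟨card_sdiff_of_subset inter_subset_left, card_sdiff_of_subset inter_subset_right,
        disjoint_union_left.2 ⟨hAB.mono_right sdiff_subset, disjoint_sdiff⟩,
        disjoint_union_left.2 ⟨hAC.mono_right sdiff_subset, disjoint_sdiff⟩, ?_⟩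
      simp only [disjoint_left, mem_sdiff, mem_inter]
      tauto
    · rintro ⟨B, C⟩ h
      simp only [mem_filter, mem_product, mem_univ, true_and] at hD h ⊢
      obtain ⟨hD, hAD⟩ := hD
      obtain ⟨hB, hC, hDB, hDC, hBC⟩ := h
      rw [disjoint_union_left] at hDB hDC
      refine ⟨⟨⟨?_, disjoint_union_right.2 ⟨hAD, hDB.1⟩⟩, ?_,
        disjoint_union_right.2 ⟨hAD, hDC.1⟩⟩, ?_⟩
      · rw [card_union_of_disjoint hDB.2]; omega
      · rw [card_union_of_disjoint hDC.2]; omega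
      · rw [← union_inter_distrib_left, disjoint_iff_inter_eq_empty.1 hBC, union_empty]
    · rintro ⟨B, C⟩ h
      obtain ⟨-, rfl⟩ := mem_filter.1 h
      exact Prod.ext (union_sdiff_of_subset inter_subset_left)
        (union_sdiff_of_subset inter_subset_right)
    · rintro ⟨B, C⟩ h
      obtain ⟨-, -, hDB, hDC, -⟩ := (mem_filter.1 h).2
      rw [disjoint_union_left] at hDB hDC
      exact Prod.ext (union_sdiff_cancel_left hDB.2) (union_sdiff_cancel_left hDC.2)
    · rintro ⟨B, C⟩ h
      obtain ⟨-, rfl⟩ := mem_filter.1 h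
      dsimp only
      rw [union_sdiff_of_subset inter_subset_left, union_sdiff_of_subset inter_subset_right]
  · rintro ⟨B, C⟩ h
    simp only [mem_filter, mem_product, mem_univ, true_and] at h ⊢
    obtain ⟨⟨rfl, hAB⟩, rfl, hAC⟩ := h
    exact ⟨le_min (card_le_card inter_subset_left) (card_le_card inter_subset_right),
      hAB.mono_right inter_subset_left⟩

end Finsets

section Coefficients

variable {U : Type*} [Fintype U] [DecidableEq U] (g₁ g₂ : Finset U → ℝ)

theorem sSet_eq_sum_filter_s11 (B : Finset U) (u₁ u₂ : ℕ) :
    sSet g₁ g₂ B u₁ u₂ = ∑ q : Finset U × Finset U with #q.1 = u₁ ∧ #q.2 = u₂ ∧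
      Disjoint B q.1 ∧ Disjoint B q.2 ∧ Disjoint q.1 q.2,
        hatC g₁ (B ∪ q.1) * hatC g₂ (B ∪ q.2) := by
  rw [sum_filter, Fintype.sum_prod_type]
  rfl

theorem sA_mul_sA (A : Finset U) (v₁ v₂ : ℕ) :
    sA g₁ A v₁ * sA g₂ A v₂ = ∑ d ∈ range (min v₁ v₂ + 1),
      ∑ D with #D = d ∧ Disjoint A D, sSet g₁ g₂ (A ∪ D) (v₁ - d) (v₂ - d) := by
  rw [← sum_filter_le_eq_sum_range card _ (Disjoint A)
    fun d D => sSet g₁ g₂ (A ∪ D) (v₁ - d) (v₂ - d)]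
  simp only [sA, sum_mul_sum, sum_disjoint_pairs_eq_sum_inter, sSet_eq_sum_filter_s11, union_assoc]

theorem sum_sA_mul_sA (m v₁ v₂ : ℕ) :
    ∑ A with #A = m, sA g₁ A v₁ * sA g₂ A v₂ = ∑ d ∈ range (min v₁ v₂ + 1),
      ((m + d).choose d : ℝ) * sK g₁ g₂ (m + d) (v₁ - d) (v₂ - d) := by
  simp only [sA_mul_sA]
  rw [sum_comm]
  refine sum_congr rfl fun d _ => ?_
  rw [sum_sum_disjoint_union m d fun A => sSet g₁ g₂ A (v₁ - d) (v₂ - d), nsmul_eq_mul]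
  rfl

end Coefficients

/-- The inversion formula:
`s_{k,u₁,u₂}(g₁,g₂) = ∑_{u ≥ 0} (-1)^u C(k+u,u) ∑_{A : |A| = k+u} s_{A,u₁-u}(g₁) s_{A,u₂-u}(g₂)`
(terms with a negative index vanish). -/
theorem stmt11 {U : Type*} [Fintype U] [DecidableEq U] (g₁ g₂ : Finset U → ℝ)
    (k u₁ u₂ : ℕ) :
    sK g₁ g₂ k u₁ u₂ =
      ∑ u ∈ Finset.range (min u₁ u₂ + 1),
        (-1 : ℝ) ^ u * (Nat.choose (k + u) u : ℝ) *
          ∑ A ∈ univ.filter (fun A : Finset U => A.card = k + u),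
            sA g₁ A (u₁ - u) * sA g₂ A (u₂ - u) := by
  have triangular (u : ℕ) :
      ∑ A with #A = k + u, sA g₁ A (u₁ - u) * sA g₂ A (u₂ - u) =
        ∑ d ∈ range (min u₁ u₂ - u + 1), ((k + u + d).choose d : ℝ) *
          sK g₁ g₂ (k + (u + d)) (u₁ - (u + d)) (u₂ - (u + d)) := by
    rw [sum_sA_mul_sA, Nat.sub_min_sub_right]
    simp only [Nat.sub_sub, Nat.add_assoc]
  rw [sum_congr rfl fun u _ => by rw [triangular u], sum_neg_one_pow_mul_choose_mul_sum_choose k _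
    fun j => sK g₁ g₂ (k + j) (u₁ - j) (u₂ - j)]
  rfl
end

section
/- Let $n > 2k$ and let $P_k$ be the 0/1 inclusion matrix whose rows are indexed by $k$-subsets and columns by $(k+1)$-subsets of an $n$-element set $U$, with $(P_k)_{AB} = 1$ iff $A \subseteq B$. Then the eigenvalues of $P_k P_k^T$ are exactly $(n-k-i)(k+1-i)$ for $i \in \{0, 1, \dots, k\}$, with the eigenvalue $(n-k-i)(k+1-i)$ having multiplicity $\binom{n}{i} - \binom{n}{i-1}$. -/
/-!
Counting common supersets and common subsets gives
`P_{k+1} P_{k+1}ᵀ = P_kᵀ P_k + (n - 2k - 2) I`, and `P_kᵀ P_k` has the spectrum of `P_k P_kᵀ`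
together with `C(n,k+1) - C(n,k)` extra zeros. So passing from `k` to `k + 1` shifts every
eigenvalue `(n-k-i)(k+1-i)` by `n - 2k - 2`, turning it into `(n-k-1-i)(k+2-i)`, and adds the
new eigenvalue `n - 2k - 2` with multiplicity `C(n,k+1) - C(n,k)`.
-/

open Finset Polynomial Matrix

/-- The 0/1 inclusion matrix between `k`-subsets and `(k+1)`-subsets of `Fin n`:
`(P_k)_{AB} = 1` iff `A ⊆ B`. -/
noncomputable def Pincl (n k : ℕ) :
    Matrix {A : Finset (Fin n) // A.card = k} {B : Finset (Fin n) // B.card = k + 1} ℝ :=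
  fun A B => if A.1 ⊆ B.1 then 1 else 0

section Counting

variable {α : Type*} [Fintype α]

lemma sum_boole_subtype_card {R : Type*} [AddCommMonoidWithOne R] {m : ℕ}
    (p : Finset α → Prop) [DecidablePred p] :
    ∑ B : {B : Finset α // #B = m}, (if p B.1 then (1 : R) else 0) =
      #{B ∈ powersetCard m univ | p B} := by
  rw [← sum_boole,
    ← sum_subtype (powersetCard m univ) (by simp) fun B => if p B then (1 : R) else 0]

variable [DecidableEq α]

lemma card_supersets (S : Finset α) {m : ℕ} (hS : #S ≤ m) :
    #{B ∈ powersetCard m univ | S ⊆ B} = (Fintype.card α - #S).choose (m - #S) := by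
  rw [← card_compl, ← card_powersetCard]
  have disjoint_of_subset_compl {T : Finset α} (hT : T ⊆ Sᶜ) : Disjoint T S :=
    subset_compl_iff_disjoint_right.1 hT
  refine card_nbij' (· \ S) (· ∪ S) ?_ ?_ ?_ ?_ <;> intro B hB <;>
    simp only [mem_coe, mem_filter, mem_powersetCard, subset_univ, true_and] at hB ⊢
  · refine ⟨fun x hx => by simpa using (mem_sdiff.1 hx).2, ?_⟩
    rw [card_sdiff_of_subset hB.2, hB.1]
  · rw [card_union_of_disjoint (disjoint_of_subset_compl hB.1), hB.2]
    exact ⟨by omega, subset_union_right⟩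
  · exact sdiff_union_of_subset hB.2
  · exact union_sdiff_cancel_right (disjoint_of_subset_compl hB.1)

lemma card_subsets (D : Finset α) (m : ℕ) :
    #{C ∈ powersetCard m univ | C ⊆ D} = (#D).choose m := by
  rw [← card_powersetCard]
  congr 1
  ext C
  simp [mem_powersetCard, and_comm]

lemma card_supersets_union_eq {k : ℕ} {A A' : Finset α} (hA : #A = k + 1) (hA' : #A' = k + 1) :
    (#{B ∈ powersetCard (k + 2) univ | A ∪ A' ⊆ B} : ℝ) =
      (#(A ∩ A')).choose k + if A = A' then (Fintype.card α : ℝ) - 2 * (k + 1) else 0 := by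
  by_cases hAA : A = A'
  · subst hAA
    have hk : k + 1 ≤ Fintype.card α := hA ▸ card_le_univ A
    rw [union_self, inter_self, card_supersets A (by omega), hA, if_pos rfl,
      show k + 2 - (k + 1) = 1 by omega, Nat.choose_one_right, Nat.choose_succ_self_right]
    push_cast [hk]
    ring
  · have hunion : k + 2 ≤ #(A ∪ A') := by
      by_contra! hlt
      have hA_eq : A = A ∪ A' := eq_of_subset_of_card_le subset_union_left (by omega)
      have hA'_eq : A' = A ∪ A' := eq_of_subset_of_card_le subset_union_right (by omega)
      exact hAA (hA_eq.trans hA'_eq.symm)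
    have hsum : #(A ∩ A') + #(A ∪ A') = 2 * k + 2 := by
      have := card_inter_add_card_union A A'
      omega
    rw [if_neg hAA, add_zero]
    -- both sides are `1` if `A` and `A'` differ in one element, and `0` otherwise
    rcases hunion.eq_or_lt with heq | hlt
    · rw [card_supersets _ heq.ge, ← heq, Nat.sub_self, Nat.choose_zero_right,
        show #(A ∩ A') = k by omega, Nat.choose_self]
    · rw [Nat.choose_eq_zero_of_lt (by omega), Nat.cast_inj, card_eq_zero,
        filter_eq_empty_iff]
      intro B hB hAB
      have := card_le_card hAB
      rw [(mem_powersetCard.1 hB).2] at this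
      omega

end Counting

lemma Pincl_mul_transpose_apply (n k : ℕ) (A A' : {A : Finset (Fin n) // #A = k}) :
    (Pincl n k * (Pincl n k)ᵀ) A A' =
      #{B ∈ powersetCard (k + 1) univ | A.1 ∪ A'.1 ⊆ B} := by
  simp only [mul_apply, transpose_apply, Pincl, ite_zero_mul_ite_zero, mul_one,
    ← union_subset_iff]
  exact sum_boole_subtype_card _

lemma transpose_mul_Pincl_apply (n k : ℕ) (B B' : {B : Finset (Fin n) // #B = k + 1}) :
    ((Pincl n k)ᵀ * Pincl n k) B B' = (#(B.1 ∩ B'.1)).choose k := by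
  simp only [mul_apply, transpose_apply, Pincl, ite_zero_mul_ite_zero, mul_one,
    ← subset_inter_iff]
  rw [sum_boole_subtype_card (· ⊆ B.1 ∩ B'.1), card_subsets]

lemma Pincl_succ_mul_transpose (n k : ℕ) :
    Pincl n (k + 1) * (Pincl n (k + 1))ᵀ =
      (Pincl n k)ᵀ * Pincl n k + scalar _ ((n : ℝ) - 2 * (k + 1)) := by
  ext A A'
  rw [Matrix.add_apply, Pincl_mul_transpose_apply, transpose_mul_Pincl_apply, scalar_apply,
    diagonal_apply, card_supersets_union_eq A.2 A'.2, Fintype.card_fin]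
  simp [Subtype.ext_iff]

lemma Matrix.charpoly_add_scalar {R ι : Type*} [CommRing R] [Fintype ι] [DecidableEq ι]
    (M : Matrix ι ι R) (c : R) : (M + scalar ι c).charpoly = M.charpoly.comp (X - C c) := by
  simpa [sub_eq_add_neg] using charpoly_sub_scalar M (-c)

lemma charpoly_Pincl_succ_mul_transpose {n k : ℕ} (h : 2 * (k + 1) < n) :
    (Pincl n (k + 1) * (Pincl n (k + 1))ᵀ).charpoly =
      (X ^ (n.choose (k + 1) - n.choose k) * (Pincl n k * (Pincl n k)ᵀ).charpoly).comp
        (X - C ((n : ℝ) - 2 * (k + 1))) := by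
  have hcard : n.choose k ≤ n.choose (k + 1) := Nat.choose_le_succ_of_lt_half_left (by omega)
  rw [Pincl_succ_mul_transpose, charpoly_add_scalar,
    charpoly_mul_comm_of_le _ _ (by simpa using hcard)]
  simp

lemma charpoly_Pincl_zero_mul_transpose (n : ℕ) :
    (Pincl n 0 * (Pincl n 0)ᵀ).charpoly = X - C (n : ℝ) := by
  have hempty (A : {A : Finset (Fin n) // #A = 0}) : A.1 = ∅ := card_eq_zero.1 A.2
  have hscalar : Pincl n 0 * (Pincl n 0)ᵀ = scalar _ (n : ℝ) := by
    ext A A'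
    obtain rfl : A = A' := Subtype.ext ((hempty A).trans (hempty A').symm)
    rw [Pincl_mul_transpose_apply, hempty A, union_self, card_supersets ∅ (by simp),
      scalar_apply, diagonal_apply_eq]
    simp
  rw [hscalar, scalar_apply, charpoly_diagonal, prod_const, card_univ, Fintype.card_finset_len]
  simp

noncomputable def inclusionCharpoly (n k : ℕ) : ℝ[X] :=
  ∏ i ∈ Finset.range (k + 1),
    (X - C (((n - k - i) * (k + 1 - i) : ℕ) : ℝ)) ^
      (Nat.choose n i - if i = 0 then 0 else Nat.choose n (i - 1))

lemma inclusionCharpoly_succ {n k : ℕ} (h : 2 * (k + 1) ≤ n) :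
    inclusionCharpoly n (k + 1) =
      (X ^ (n.choose (k + 1) - n.choose k) * inclusionCharpoly n k).comp
        (X - C ((n : ℝ) - 2 * (k + 1))) := by
  simp only [inclusionCharpoly, mul_comp, pow_comp, X_comp, Polynomial.prod_comp, sub_comp,
    C_comp]
  rw [prod_range_succ, mul_comm]
  congr 1
  · rw [if_neg k.succ_ne_zero, Nat.add_sub_cancel, Nat.add_sub_cancel_left, mul_one]
    congr 3
    push_cast [Nat.sub_sub, show k + 1 + (k + 1) ≤ n by omega]
    ring
  · refine prod_congr rfl fun i hi => ?_
    have hi : i ≤ k := Nat.lt_succ_iff.1 (mem_range.1 hi)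
    rw [sub_sub, ← C_add]
    congr 3
    push_cast [Nat.sub_sub, show k + i ≤ n by omega, show k + 1 + i ≤ n by omega,
      show i ≤ k + 1 by omega, show i ≤ k + 1 + 1 by omega]
    ring

/-- For `n > 2k`, the eigenvalues of `P_k P_kᵀ` are exactly `(n-k-i)(k+1-i)` for
`i ∈ {0,…,k}`, with multiplicity `C(n,i) - C(n,i-1)` (where `C(n,-1) = 0`);
expressed via the characteristic polynomial. -/
theorem stmt17 (n k : ℕ) (h : 2 * k < n) :
    (Pincl n k * (Pincl n k)ᵀ).charpoly =
      ∏ i ∈ Finset.range (k + 1),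
        (X - C (((n - k - i) * (k + 1 - i) : ℕ) : ℝ)) ^
          (Nat.choose n i - if i = 0 then 0 else Nat.choose n (i - 1)) := by
  change _ = inclusionCharpoly n k
  induction k with
  | zero => simp [charpoly_Pincl_zero_mul_transpose, inclusionCharpoly]
  | succ k ih =>
    rw [charpoly_Pincl_succ_mul_transpose h, ih (by omega), inclusionCharpoly_succ (by omega)]
end

section
/- Let $n > 2k$ and let $P_k$ be the inclusion matrix between $k$-subsets and $(k+1)$-subsets of an $n$-set. For $V \subseteq U$ with $|V| = m \le k$, define the vector $x_V$ indexed by $k$-subsets $B$ by $(x_V)_B = (-1)^{|B \cap V|} / |\{C : |C| = k,\ C \cap V = B \cap V\}|$. Then $x_V$ is an eigenvector of $P_k P_k^T$ with eigenvalue $(n-k-m)(k+1-m)$. -/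
open Finset Matrix

/-!
`(P Pᵀ f)(A) = (n - k) f(A) + ∑_{c ∉ A, b ∈ A} f(A - b + c)`: the term `b = c` of
`∑_{c ∉ A} ∑_{b ∈ A + c} f(A + c - b)` gives the diagonal. The denominator in `x_V` counts
the `k`-sets with a prescribed trace on `V`, so `x_V(A) = g(|A ∩ V|)` with
`g(j) = (-1)^j / C(n - m, k - j)`, and an exchange `A ↦ A - b + c` moves `|A ∩ V|` by
`[c ∈ V] - [b ∈ V]`. Counting the exchanges of each of the four types reduces the eigenvalue
equation to a three-term identity in `g(j - 1), g(j), g(j + 1)`, which follows from the two-term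
recurrence `(k - j) g(j + 1) = -(n - m - k + j + 1) g(j)`, i.e. from
`C(N, a + 1) (a + 1) = C(N, a) (N - a)`.
-/

section
variable {α M R : Type*} [DecidableEq α] [AddCommMonoid M] [NonAssocSemiring R]

lemma sum_insert_erase_of_notMem {A : Finset α} {c : α} (hc : c ∉ A) (f : Finset α → M) :
    ∑ b ∈ insert c A, f ((insert c A).erase b) =
      f A + ∑ b ∈ A, f (insert c (A.erase b)) := by
  rw [sum_insert hc, erase_insert hc]
  congr 1
  exact sum_congr rfl fun b hb => by rw [erase_insert_of_ne (ne_of_mem_of_not_mem hb hc).symm]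

lemma card_insert_erase_inter_add {A V : Finset α} {b c : α} (hc : c ∉ A) (hb : b ∈ A) :
    #(insert c (A.erase b) ∩ V) + (if b ∈ V then 1 else 0) =
      #(A ∩ V) + (if c ∈ V then 1 else 0) := by
  have hc' : c ∉ A.erase b ∩ V := fun h => hc (mem_of_mem_erase (mem_of_mem_inter_left h))
  have herase : #(A.erase b ∩ V) + (if b ∈ V then 1 else 0) = #(A ∩ V) := by
    split_ifs with hbV
    · rw [erase_inter, card_erase_add_one (mem_inter.2 ⟨hb, hbV⟩)]
    · rw [erase_inter, erase_eq_of_notMem fun h => hbV (mem_of_mem_inter_right h), add_zero]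
  split_ifs at herase ⊢ with hbV hcV hcV
  · rw [insert_inter_of_mem hcV, card_insert_of_notMem hc']; omega
  · rw [insert_inter_of_notMem hcV]; omega
  · rw [insert_inter_of_mem hcV, card_insert_of_notMem hc']; omega
  · rw [insert_inter_of_notMem hcV]; omega

lemma sum_card_insert_erase_inter {A V : Finset α} {c : α} (hc : c ∉ A) (φ : ℕ → M) :
    ∑ b ∈ A, φ #(insert c (A.erase b) ∩ V) =
      #(A ∩ V) • φ (#(A ∩ V) + (if c ∈ V then 1 else 0) - 1) +
        #(A \ V) • φ (#(A ∩ V) + (if c ∈ V then 1 else 0)) := by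
  rw [← sum_inter_add_sum_sdiff A V]
  congr 1 <;> refine sum_eq_card_nsmul fun b hb => congrArg φ ?_
  · have := card_insert_erase_inter_add (V := V) hc (mem_of_mem_inter_left hb)
    rw [if_pos (mem_of_mem_inter_right hb)] at this
    omega
  · have := card_insert_erase_inter_add (V := V) hc (mem_sdiff.1 hb).1
    rw [if_neg (mem_sdiff.1 hb).2] at this
    omega

variable [Fintype α]

lemma sum_sum_card_insert_erase_inter (A V : Finset α) (φ : ℕ → M) :
    ∑ c ∈ Aᶜ, ∑ b ∈ A, φ #(insert c (A.erase b) ∩ V) =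
      #(Aᶜ ∩ V) • (#(A ∩ V) • φ #(A ∩ V) + #(A \ V) • φ (#(A ∩ V) + 1)) +
        #(Aᶜ \ V) • (#(A ∩ V) • φ (#(A ∩ V) - 1) + #(A \ V) • φ #(A ∩ V)) := by
  rw [← sum_inter_add_sum_sdiff Aᶜ V]
  congr 1 <;> refine sum_eq_card_nsmul fun c hc => ?_
  · rw [sum_card_insert_erase_inter (mem_compl.1 (mem_of_mem_inter_left hc)),
      if_pos (mem_of_mem_inter_right hc), Nat.add_sub_cancel]
  · rw [sum_card_insert_erase_inter (mem_compl.1 (mem_sdiff.1 hc).1), if_neg (mem_sdiff.1 hc).2,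
      add_zero]

lemma sum_subset_of_card_eq_add_one {k : ℕ} {B : Finset α} (hB : #B = k + 1)
    (f : Finset α → R) :
    ∑ A : {A : Finset α // #A = k}, (if A.1 ⊆ B then 1 else 0) * f A.1 =
      ∑ b ∈ B, f (B.erase b) := by
  simp_rw [boole_mul, ← sum_filter]
  refine (sum_bij (fun b hb => ⟨B.erase b, by simp [card_erase_of_mem hb, hB]⟩)
    ?_ ?_ ?_ fun _ _ => rfl).symm
  · simp [erase_subset]
  · intro b hb b' hb' h
    simpa [erase_inj _ hb] using congrArg Subtype.val h
  · intro A hA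
    obtain ⟨b, hbA, rfl⟩ := exists_eq_insert_iff.2 ⟨(mem_filter.1 hA).2, by rw [A.2, hB]⟩
    exact ⟨b, mem_insert_self b A, Subtype.ext (erase_insert hbA)⟩

lemma sum_superset_of_card_eq {k : ℕ} {A : Finset α} (hA : #A = k) (g : Finset α → R) :
    ∑ B : {B : Finset α // #B = k + 1}, (if A ⊆ B.1 then 1 else 0) * g B.1 =
      ∑ c ∈ Aᶜ, g (insert c A) := by
  simp_rw [boole_mul, ← sum_filter]
  refine (sum_bij
    (fun c hc => ⟨insert c A, by simp [card_insert_of_notMem (mem_compl.1 hc), hA]⟩)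
    ?_ ?_ ?_ fun _ _ => rfl).symm
  · simp [subset_insert]
  · intro c hc c' _ h
    exact (insert_inj (mem_compl.1 hc)).1 (congrArg Subtype.val h)
  · intro B hB
    obtain ⟨c, hcA, hB'⟩ := exists_eq_insert_iff.2 ⟨(mem_filter.1 hB).2, by rw [B.2, hA]⟩
    exact ⟨c, mem_compl.2 hcA, Subtype.ext hB'⟩

lemma card_filter_card_eq_inter_eq {k : ℕ} {S V : Finset α} (hSV : S ⊆ V) (hS : #S ≤ k) :
    #{C : Finset α | #C = k ∧ C ∩ V = S} = (Fintype.card α - #V).choose (k - #S) := by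
  rw [← card_compl, ← card_powersetCard]
  refine card_nbij' (· \ V) (S ∪ ·) ?_ ?_ ?_ ?_
  all_goals
    intro C hC
    simp only [mem_coe, mem_filter, mem_univ, true_and, mem_powersetCard,
      subset_compl_iff_disjoint_right] at hC ⊢
  · obtain ⟨rfl, rfl⟩ := hC
    refine ⟨sdiff_disjoint, ?_⟩
    have := card_sdiff_add_card_inter C V
    omega
  · have hSC : Disjoint S C := hC.1.symm.mono_left hSV
    refine ⟨by rw [card_union_of_disjoint hSC, hC.2]; omega, ?_⟩
    rw [union_inter_distrib_right, inter_eq_left.2 hSV, disjoint_iff_inter_eq_empty.1 hC.1,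
      union_empty]
  · rw [← hC.2, union_comm, sdiff_union_inter]
  · rw [union_sdiff_distrib, sdiff_eq_empty_iff_subset.2 hSV, hC.1.sdiff_eq_left, empty_union]

end

lemma Pincl_mul_transpose_mulVec {n k : ℕ} (f : Finset (Fin n) → ℝ)
    (A : {A : Finset (Fin n) // A.card = k}) :
    ((Pincl n k * (Pincl n k)ᵀ) *ᵥ fun A' => f A'.1) A =
      (n - k) • f A.1 + ∑ c ∈ A.1ᶜ, ∑ b ∈ A.1, f (insert c (A.1.erase b)) := by
  have hT : ((Pincl n k)ᵀ *ᵥ fun A' => f A'.1) = fun B => ∑ b ∈ B.1, f (B.1.erase b) :=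
    funext fun B => sum_subset_of_card_eq_add_one B.2 f
  rw [← mulVec_mulVec, hT]
  refine (sum_superset_of_card_eq A.2 fun B => ∑ b ∈ B, f (B.erase b)).trans ?_
  rw [sum_congr rfl fun c hc => sum_insert_erase_of_notMem (mem_compl.1 hc) f, sum_add_distrib,
    sum_const, card_compl, Fintype.card_fin, A.2]

noncomputable def signedInvChoose (N k j : ℕ) : ℝ := (-1) ^ j / N.choose (k - j)

lemma signedInvChoose_succ {N k j : ℕ} (hj : j < k) (hk : k ≤ N) :
    ((k : ℝ) - j) * signedInvChoose N k (j + 1) =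
      -((N : ℝ) - k + j + 1) * signedInvChoose N k j := by
  obtain ⟨a, rfl⟩ := Nat.exists_eq_add_of_lt hj
  have hrec : (N.choose (a + 1) : ℝ) * (a + 1) = N.choose a * (N - a) := by
    rw [← Nat.cast_sub (by omega)]
    exact_mod_cast Nat.choose_succ_right_eq N a
  have hpos : (0 : ℝ) < N.choose a := by exact_mod_cast Nat.choose_pos (by omega)
  have hpos' : (0 : ℝ) < N.choose (a + 1) := by exact_mod_cast Nat.choose_pos (by omega)
  rw [signedInvChoose, signedInvChoose, show j + a + 1 - (j + 1) = a by omega,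
    show j + a + 1 - j = a + 1 by omega, pow_succ]
  push_cast
  field_simp
  linear_combination -hrec

lemma eigen_identity_of_recurrence {n m k j : ℕ} (g : ℕ → ℝ)
    (hrec : ∀ i < k, ((k : ℝ) - i) * g (i + 1) = -((n : ℝ) - m - k + i + 1) * g i)
    (h : k + m ≤ n) (hm : m ≤ k) (hj : j ≤ m) :
    (n - k) • g j + ((m - j) • (j • g j + (k - j) • g (j + 1)) +
      (n - k - (m - j)) • (j • g (j - 1) + (k - j) • g j)) =
      ((n - k - m) * (k + 1 - m)) • g j := by
  have hup : ((m : ℝ) - j) * (((k : ℝ) - j) * g (j + 1)) =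
      -((m : ℝ) - j) * ((n : ℝ) - m - k + j + 1) * g j := by
    rcases lt_or_eq_of_le (hj.trans hm) with hjk | rfl
    · rw [hrec j hjk]; ring
    · rw [le_antisymm hm hj]; ring
  have hdown : (j : ℝ) * (((n : ℝ) - m - k + j) * g (j - 1)) =
      -(j : ℝ) * ((k : ℝ) - j + 1) * g j := by
    rcases j with _ | i
    · simp
    · have := hrec i (by omega)
      rw [Nat.add_sub_cancel]
      push_cast
      linear_combination ((i : ℝ) + 1) * this
  simp only [nsmul_eq_mul]
  push_cast [Nat.cast_sub (show m - j ≤ n - k by omega), Nat.cast_sub (show k ≤ n by omega),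
    Nat.cast_sub hj, Nat.cast_sub (hj.trans hm), Nat.cast_sub (show m ≤ n - k by omega),
    Nat.cast_sub (show m ≤ k + 1 by omega)]
  linear_combination hup + hdown

/-- For `n > 2k` and `V` of size `m ≤ k`, the vector
`(x_V)_B = (-1)^{|B ∩ V|} / |{C : |C| = k, C ∩ V = B ∩ V}|` is an eigenvector of
`P_k P_kᵀ` with eigenvalue `(n-k-m)(k+1-m)`. -/
theorem stmt18 (n k m : ℕ) (h : 2 * k < n) (V : Finset (Fin n)) (hV : V.card = m)
    (hm : m ≤ k) (x : {A : Finset (Fin n) // A.card = k} → ℝ)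
    (hx : ∀ B : {A : Finset (Fin n) // A.card = k},
      x B = (-1 : ℝ) ^ (B.1 ∩ V).card /
        ((Finset.univ.filter
            (fun C : Finset (Fin n) => C.card = k ∧ C ∩ V = B.1 ∩ V)).card : ℝ)) :
    (Pincl n k * (Pincl n k)ᵀ).mulVec x = (((n - k - m) * (k + 1 - m) : ℕ) : ℝ) • x := by
  obtain rfl : x = fun B => signedInvChoose (n - m) k #(B.1 ∩ V) := by
    funext B
    rw [hx, card_filter_card_eq_inter_eq inter_subset_right
      ((card_le_card inter_subset_left).trans B.2.le), Fintype.card_fin, hV]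
    rfl
  funext A
  have hj : #(A.1 ∩ V) ≤ m := hV ▸ card_le_card inter_subset_right
  have hA_out : #(A.1 \ V) = k - #(A.1 ∩ V) := by rw [card_sdiff, A.2, inter_comm]
  have hAc_in : #(A.1ᶜ ∩ V) = m - #(A.1 ∩ V) := by
    rw [inter_comm, ← sdiff_eq_inter_compl, card_sdiff, hV]
  have hAc_out : #(A.1ᶜ \ V) = n - k - (m - #(A.1 ∩ V)) := by
    rw [card_sdiff, card_compl, Fintype.card_fin, A.2, inter_comm, hAc_in]
  rw [Pincl_mul_transpose_mulVec (fun B => signedInvChoose (n - m) k #(B ∩ V)),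
    sum_sum_card_insert_erase_inter, hA_out, hAc_in, hAc_out, Pi.smul_apply,
    Nat.cast_smul_eq_nsmul]
  refine eigen_identity_of_recurrence _ (fun i hi => ?_) (by omega) hm hj
  rw [signedInvChoose_succ hi (by omega), Nat.cast_sub (by omega : m ≤ n)]
end

section
/- Averaging over random permutations: for any functions $f, g : \mathcal{P}(U) \to \mathbb{R}$ on subsets of a finite set $U$ with $|U| = n$, $\mathbb{E}_{\sigma}[(f \cdot \sigma(g))^2] = \sum_{k, u_1, u_2 \ge 0} \frac{k!\, u_1!\, u_2!\, (n - k - u_1 - u_2)!}{n!}\, s_{k,u_1,u_2}(f,f)\, s_{k,u_1,u_2}(g,g)$, where the expectation is uniform over all permutations $\sigma$ of $U$, $\sigma(g)(C) = g(\sigma^{-1}(C))$, $f \cdot g = 2^{-n}\sum_C f(C)g(C)$, and $s_{k,u_1,u_2}(g_1,g_2) = \sum_{A,B,C\ \text{pairwise disjoint},\ |A|=k,\ |B|=u_1,\ |C|=u_2} \hat{g_1}_{A\cup B}\hat{g_2}_{A\cup C}$. -/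
open Finset

/-! By Parseval, `f ⬝ σ(g) = ∑_V f̂_V ĝ_{σ⁻¹V}`, so `(f ⬝ σ(g))²` is a sum over pairs `(V, W)` of
`f̂_V f̂_W ĝ_{σ⁻¹V} ĝ_{σ⁻¹W}`. The permutations carrying `(V, W)` to `(V', W')` are those that
transport the colouring of `U` by membership in `V` and `W` to the one by membership in `V'` and
`W'`; there are `k! u₁! u₂! (n - k - u₁ - u₂)!` of them if both pairs have the same type
`(|V ∩ W|, |V \ W|, |W \ V|) = (k, u₁, u₂)`, and none otherwise. Grouping the pairs by type, and
identifying the pairs of type `(k, u₁, u₂)` with the triples `(V ∩ W, V \ W, W \ V)` indexing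
`s_{k,u₁,u₂}`, yields the formula. -/

section Fourier
variable {U : Type*} [Fintype U] [DecidableEq U]

omit [Fintype U] in
theorem eV_eq_prod (V C : Finset U) : eV V C = ∏ x ∈ V, if x ∈ C then -1 else 1 := by
  rw [eV, prod_ite, prod_const, prod_const, one_pow, mul_one, filter_mem_eq_inter]

theorem sum_eV_mul_eV (C D : Finset U) :
    ∑ V : Finset U, eV V C * eV V D = if C = D then 2 ^ Fintype.card U else 0 := by
  set s : Finset U → U → ℝ := fun C x => if x ∈ C then -1 else 1
  calc ∑ V : Finset U, eV V C * eV V D = ∏ x : U, (1 + s C x * s D x) := by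
        simp only [eV_eq_prod, ← prod_mul_distrib, prod_one_add, powerset_univ, s]
    _ = _ := by
        split_ifs with hCD
        · subst hCD
          have hsq : ∀ x, 1 + s C x * s C x = 2 := fun x => by simp only [s]; split_ifs <;> norm_num
          simp [hsq, card_univ]
        · obtain ⟨x, hx⟩ : ∃ x, ¬(x ∈ C ↔ x ∈ D) := by
            by_contra! h; exact hCD (ext h)
          refine prod_eq_zero (mem_univ x) ?_
          simp only [s]; split_ifs <;> first | tauto | norm_num

theorem ip_eq_sum_hatC_mul_hatC (f h : Finset U → ℝ) :
    ip f h = ∑ V : Finset U, hatC f V * hatC h V := by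
  have h2 : (2 : ℝ) ^ Fintype.card U ≠ 0 := by positivity
  calc ip f h = ((2 : ℝ) ^ Fintype.card U)⁻¹ * ((2 : ℝ) ^ Fintype.card U)⁻¹ *
        ∑ D : Finset U, ∑ C : Finset U, f C * h D * ∑ V : Finset U, eV V C * eV V D := by
        simp only [sum_eV_mul_eV, mul_ite, mul_zero, sum_ite_eq', mem_univ, if_true, ip]
        field_simp
        simp only [mul_sum, mul_assoc]
    _ = _ := by
        simp only [hatC, ip, mul_sum, sum_mul]
        symm
        rw [sum_comm]; refine sum_congr rfl fun D _ => ?_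
        rw [sum_comm]; refine sum_congr rfl fun C _ => ?_
        refine sum_congr rfl fun V _ => ?_
        ring

theorem hatC_comp_image (g : Finset U → ℝ) (τ : Equiv.Perm U) (V : Finset U) :
    hatC (fun C => g (C.image τ)) V = hatC g (V.image τ) := by
  have heV : ∀ C : Finset U, eV (V.image τ) (C.image τ) = eV V C := by
    intro C
    rw [eV, eV, ← image_inter _ _ τ.injective, card_image_of_injective _ τ.injective]
  unfold hatC ip
  congr 1
  refine Fintype.sum_equiv τ.finsetCongr _ _ fun C => ?_
  simp [Equiv.finsetCongr_apply, map_eq_image, heV]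

end Fourier

section PermColoring
variable {α ι : Type*} [Fintype α] [DecidableEq ι]

open Equiv in
theorem exists_perm_comp_eq_of_card_fiber_eq (c c' : α → ι)
    (h : ∀ i, Fintype.card {a // c a = i} = Fintype.card {a // c' a = i}) :
    ∃ σ : Perm α, c ∘ σ = c' := by
  have e : ∀ i, {a // c' a = i} ≃ {a // c a = i} := fun i => Fintype.equivOfCardEq (h i).symm
  refine ⟨(sigmaFiberEquiv c').symm.trans ((sigmaCongrRight e).trans (sigmaFiberEquiv c)), ?_⟩
  funext a
  exact (e (c' a) ⟨a, rfl⟩).prop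

theorem card_fiber_eq_of_comp_eq {c c' : α → ι} {σ : Equiv.Perm α} (hσ : c ∘ σ = c') (i : ι) :
    Fintype.card {a // c a = i} = Fintype.card {a // c' a = i} :=
  Fintype.card_congr (σ.subtypeEquiv fun a => by rw [← hσ]; rfl).symm

theorem card_perm_comp_eq [DecidableEq α] [Fintype ι] (c c' : α → ι) :
    Fintype.card {σ : Equiv.Perm α // c ∘ σ = c'} =
      if ∀ i, Fintype.card {a // c a = i} = Fintype.card {a // c' a = i} then
        ∏ i, (Fintype.card {a // c a = i}).factorial
      else 0 := by
  split_ifs with h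
  · obtain ⟨σ₀, hσ₀⟩ := exists_perm_comp_eq_of_card_fiber_eq c c' h
    rw [← DomMulAct.stabilizer_card]
    refine Fintype.card_congr (Equiv.subtypeEquiv (Equiv.mulRight σ₀⁻¹) fun σ => ?_)
    show c ∘ σ = c' ↔ (c ∘ σ) ∘ σ₀.symm = c
    rw [Equiv.comp_symm_eq, hσ₀]
  · rw [Fintype.card_eq_zero_iff]
    exact ⟨fun ⟨σ, hσ⟩ => h (card_fiber_eq_of_comp_eq hσ)⟩

end PermColoring

section PairType
variable {U : Type*} [Fintype U] [DecidableEq U]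

def pairType (V W : Finset U) : ℕ × ℕ × ℕ := (#(V ∩ W), #(V \ W), #(W \ V))

def memColor (V W : Finset U) (x : U) : Bool × Bool := (decide (x ∈ V), decide (x ∈ W))

def fiberSizes (n : ℕ) (t : ℕ × ℕ × ℕ) : Bool × Bool → ℕ
  | (true, true) => t.1
  | (true, false) => t.2.1
  | (false, true) => t.2.2
  | (false, false) => n - t.1 - t.2.1 - t.2.2

theorem fiberSizes_injective (n : ℕ) : Function.Injective (fiberSizes n) := by
  intro t t' h
  have h₁ := congrFun h (true, true)
  have h₂ := congrFun h (true, false)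
  have h₃ := congrFun h (false, true)
  simp only [fiberSizes] at h₁ h₂ h₃
  exact Prod.ext h₁ (Prod.ext h₂ h₃)

theorem prod_factorial_fiberSizes (n : ℕ) (t : ℕ × ℕ × ℕ) :
    ∏ i, (fiberSizes n t i).factorial =
      t.1.factorial * t.2.1.factorial * t.2.2.factorial * (n - t.1 - t.2.1 - t.2.2).factorial := by
  simp only [Fintype.prod_prod_type, Fintype.prod_bool, fiberSizes]
  ring

omit [Fintype U] in
theorem card_union_eq_pairType (V W : Finset U) :
    #(V ∪ W) = #(V ∩ W) + #(V \ W) + #(W \ V) := by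
  have := card_union_add_card_inter V W
  have := card_sdiff_add_card_inter V W
  have := card_sdiff_add_card_inter W V
  rw [inter_comm W V] at this
  omega

theorem card_memColor_fiber (V W : Finset U) (i : Bool × Bool) :
    Fintype.card {x // memColor V W x = i} = fiberSizes (Fintype.card U) (pairType V W) i := by
  rw [Fintype.card_subtype]
  obtain ⟨_ | _, _ | _⟩ := i
  · have hfib : univ.filter (memColor V W · = (false, false)) = (V ∪ W)ᶜ := by
      ext x; simp [memColor]
    rw [hfib, card_compl, card_union_eq_pairType, fiberSizes, pairType]
    simp only [Nat.sub_add_eq]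
  · have hfib : univ.filter (memColor V W · = (false, true)) = W \ V := by
      ext x; simp [memColor, and_comm]
    rw [hfib, fiberSizes, pairType]
  · have hfib : univ.filter (memColor V W · = (true, false)) = V \ W := by
      ext x; simp [memColor]
    rw [hfib, fiberSizes, pairType]
  · have hfib : univ.filter (memColor V W · = (true, true)) = V ∩ W := by
      ext x; simp [memColor]
    rw [hfib, fiberSizes, pairType]

omit [Fintype U] in
theorem memColor_comp_eq_iff (σ : Equiv.Perm U) (V W V' W' : Finset U) :
    memColor V W ∘ σ = memColor V' W' ↔ V.image ⇑σ⁻¹ = V' ∧ W.image ⇑σ⁻¹ = W' := by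
  have hmem : ∀ (S : Finset U) x, x ∈ S.image ⇑σ⁻¹ ↔ σ x ∈ S := fun S x => by
    simp [Equiv.Perm.inv_def, Equiv.symm_apply_eq]
  simp only [funext_iff, Finset.ext_iff, hmem, Function.comp_apply, memColor, Prod.ext_iff,
    decide_eq_decide, forall_and]

theorem card_perm_image_inv_eq (V W V' W' : Finset U) :
    #(univ.filter fun σ : Equiv.Perm U => V.image ⇑σ⁻¹ = V' ∧ W.image ⇑σ⁻¹ = W') =
      if pairType V W = pairType V' W' then
        ∏ i, (fiberSizes (Fintype.card U) (pairType V W) i).factorial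
      else 0 := by
  rw [← Fintype.card_subtype,
    Fintype.card_congr (Equiv.subtypeEquivRight fun σ => (memColor_comp_eq_iff σ V W V' W').symm),
    card_perm_comp_eq]
  simp only [card_memColor_fiber, ← funext_iff, (fiberSizes_injective _).eq_iff]

theorem sum_perm_image_inv (F : Finset U → Finset U → ℝ) (V W : Finset U) :
    ∑ σ : Equiv.Perm U, F (V.image ⇑σ⁻¹) (W.image ⇑σ⁻¹) =
      (∏ i, (fiberSizes (Fintype.card U) (pairType V W) i).factorial : ℕ) *
        ∑ p ∈ univ.filter (fun p : Finset U × Finset U => pairType p.1 p.2 = pairType V W),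
          F p.1 p.2 := by
  rw [← sum_fiberwise_of_maps_to (g := fun σ : Equiv.Perm U => (V.image ⇑σ⁻¹, W.image ⇑σ⁻¹))
    (t := univ) (fun _ _ => mem_univ _), sum_filter, mul_sum]
  refine sum_congr rfl fun p _ => ?_
  calc ∑ σ ∈ univ.filter (fun σ : Equiv.Perm U => (V.image ⇑σ⁻¹, W.image ⇑σ⁻¹) = p),
        F (V.image ⇑σ⁻¹) (W.image ⇑σ⁻¹)
      = #(univ.filter fun σ : Equiv.Perm U => V.image ⇑σ⁻¹ = p.1 ∧ W.image ⇑σ⁻¹ = p.2) *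
          F p.1 p.2 := by
        simp only [Prod.ext_iff]
        rw [sum_congr rfl fun σ hσ => by rw [(mem_filter.1 hσ).2.1, (mem_filter.1 hσ).2.2],
          sum_const, nsmul_eq_mul]
    _ = _ := by
        rw [card_perm_image_inv_eq]
        split_ifs <;> simp_all

end PairType

section SK
variable {U : Type*} [Fintype U] [DecidableEq U]

omit [Fintype U] in
theorem union_inter_union_and_union_sdiff_union {A B C : Finset U} (hAB : Disjoint A B)
    (hBC : Disjoint B C) :
    (A ∪ B) ∩ (A ∪ C) = A ∧ (A ∪ B) \ (A ∪ C) = B := by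
  rw [disjoint_left] at hAB hBC
  constructor <;> ext x <;> simp only [mem_inter, mem_union, mem_sdiff] <;> grind

theorem sK_eq_sum_triple (g₁ g₂ : Finset U → ℝ) (k u₁ u₂ : ℕ) :
    sK g₁ g₂ k u₁ u₂ =
      ∑ t ∈ univ.filter (fun t : Finset U × Finset U × Finset U =>
          #t.1 = k ∧ #t.2.1 = u₁ ∧ #t.2.2 = u₂ ∧
            Disjoint t.1 t.2.1 ∧ Disjoint t.1 t.2.2 ∧ Disjoint t.2.1 t.2.2),
        hatC g₁ (t.1 ∪ t.2.1) * hatC g₂ (t.1 ∪ t.2.2) := by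
  simp only [sK, sSet, sum_filter, Fintype.sum_prod_type]
  refine sum_congr rfl fun A _ => ?_
  split_ifs with hA <;> simp [hA]

theorem sK_eq_sum_pairType (g₁ g₂ : Finset U → ℝ) (k u₁ u₂ : ℕ) :
    sK g₁ g₂ k u₁ u₂ =
      ∑ p ∈ univ.filter (fun p : Finset U × Finset U => pairType p.1 p.2 = (k, u₁, u₂)),
        hatC g₁ p.1 * hatC g₂ p.2 := by
  rw [sK_eq_sum_triple]
  refine sum_nbij' (fun t => (t.1 ∪ t.2.1, t.1 ∪ t.2.2))
    (fun p => (p.1 ∩ p.2, p.1 \ p.2, p.2 \ p.1)) ?_ ?_ ?_ ?_ fun _ _ => rfl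
  · rintro ⟨A, B, C⟩ ht
    simp only [mem_filter, mem_univ, true_and] at ht ⊢
    obtain ⟨hA, hB, hC, hAB, hAC, hBC⟩ := ht
    obtain ⟨h₁, h₂⟩ := union_inter_union_and_union_sdiff_union hAB hBC
    obtain ⟨-, h₃⟩ := union_inter_union_and_union_sdiff_union hAC hBC.symm
    simp only [pairType, h₁, h₂, h₃, hA, hB, hC]
  · rintro ⟨V, W⟩ hp
    simp only [mem_filter, mem_univ, true_and, pairType, Prod.mk.injEq] at hp ⊢
    refine ⟨hp.1, hp.2.1, hp.2.2, (disjoint_sdiff_inter V W).symm, ?_, disjoint_sdiff_sdiff⟩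
    rw [inter_comm]
    exact (disjoint_sdiff_inter W V).symm
  · rintro ⟨A, B, C⟩ ht
    simp only [mem_filter, mem_univ, true_and] at ht
    obtain ⟨-, -, -, hAB, hAC, hBC⟩ := ht
    obtain ⟨h₁, h₂⟩ := union_inter_union_and_union_sdiff_union hAB hBC
    obtain ⟨-, h₃⟩ := union_inter_union_and_union_sdiff_union hAC hBC.symm
    simp only [h₁, h₂, h₃]
  · rintro ⟨V, W⟩ -
    exact Prod.ext (sup_inf_sdiff V W) (inter_comm V W ▸ sup_inf_sdiff W V)

theorem sK_eq_zero_of_lt (g₁ g₂ : Finset U → ℝ) {k u₁ u₂ : ℕ}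
    (h : Fintype.card U < k + u₁ + u₂) : sK g₁ g₂ k u₁ u₂ = 0 := by
  rw [sK_eq_sum_pairType]
  refine sum_eq_zero fun p hp => absurd h ?_
  rw [mem_filter, pairType, Prod.mk.injEq, Prod.mk.injEq] at hp
  obtain ⟨-, rfl, rfl, rfl⟩ := hp
  rw [not_lt, ← card_union_eq_pairType]
  exact card_le_univ _

theorem sum_mul_pairType (T : Finset U → Finset U → ℝ) (X : ℕ × ℕ × ℕ → ℝ) :
    ∑ V : Finset U, ∑ W : Finset U, T V W * X (pairType V W) =
      ∑ k ∈ range (Fintype.card U + 1), ∑ u₁ ∈ range (Fintype.card U + 1),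
        ∑ u₂ ∈ range (Fintype.card U + 1),
          (∑ p ∈ univ.filter (fun p : Finset U × Finset U => pairType p.1 p.2 = (k, u₁, u₂)),
            T p.1 p.2) * X (k, u₁, u₂) := by
  set r := range (Fintype.card U + 1)
  have hr : ∀ s : Finset U, #s ∈ r := fun s => mem_range_succ_iff.2 (card_le_univ s)
  rw [← Fintype.sum_prod_type' (f := fun V W => T V W * X (pairType V W)),
    ← sum_fiberwise_of_maps_to (g := fun p : Finset U × Finset U => pairType p.1 p.2)
      (t := r ×ˢ r ×ˢ r) (fun p _ => mem_product.2 ⟨hr _, mem_product.2 ⟨hr _, hr _⟩⟩)]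
  simp only [sum_product, sum_mul]
  refine sum_congr rfl fun k _ => sum_congr rfl fun u₁ _ => sum_congr rfl fun u₂ _ => ?_
  exact sum_congr rfl fun p hp => by rw [(mem_filter.1 hp).2]

end SK

/-- Averaging over random permutations:
`E_σ[(f ⬝ σ(g))²] = ∑_{k,u₁,u₂ : k+u₁+u₂ ≤ n} (k! u₁! u₂! (n-k-u₁-u₂)!/n!)
  s_{k,u₁,u₂}(f,f) s_{k,u₁,u₂}(g,g)` where `σ(g)(C) = g(σ⁻¹(C))` and `n = |U|`. -/
theorem stmt19 {U : Type*} [Fintype U] [DecidableEq U] (f g : Finset U → ℝ) :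
    (Fintype.card (Equiv.Perm U) : ℝ)⁻¹ *
        ∑ σ : Equiv.Perm U, (ip f (fun C => g (C.image (⇑σ⁻¹)))) ^ 2 =
      ∑ k ∈ Finset.range (Fintype.card U + 1),
        ∑ u₁ ∈ Finset.range (Fintype.card U + 1),
          ∑ u₂ ∈ Finset.range (Fintype.card U + 1),
            if k + u₁ + u₂ ≤ Fintype.card U then
              ((k.factorial * u₁.factorial * u₂.factorial *
                  (Fintype.card U - k - u₁ - u₂).factorial : ℕ) : ℝ) /
                  ((Fintype.card U).factorial : ℕ) *
                sK f f k u₁ u₂ * sK g g k u₁ u₂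
            else 0 := by
  have hsq : ∀ σ : Equiv.Perm U, ip f (fun C => g (C.image ⇑σ⁻¹)) ^ 2 =
      ∑ V : Finset U, ∑ W : Finset U,
        hatC f V * hatC f W * (hatC g (V.image ⇑σ⁻¹) * hatC g (W.image ⇑σ⁻¹)) := fun σ => by
    simp only [ip_eq_sum_hatC_mul_hatC, hatC_comp_image, sq, sum_mul_sum]
    exact sum_congr rfl fun V _ => sum_congr rfl fun W _ => by ring
  calc (Fintype.card (Equiv.Perm U) : ℝ)⁻¹ *
        ∑ σ : Equiv.Perm U, ip f (fun C => g (C.image ⇑σ⁻¹)) ^ 2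
      = ((Fintype.card U).factorial : ℝ)⁻¹ * ∑ V : Finset U, ∑ W : Finset U,
          hatC f V * hatC f W *
            ∑ σ : Equiv.Perm U, hatC g (V.image ⇑σ⁻¹) * hatC g (W.image ⇑σ⁻¹) := by
        rw [Fintype.card_perm, sum_congr rfl fun σ _ => hsq σ, sum_comm]
        simp only [mul_sum]
        exact sum_congr rfl fun V _ => sum_comm
    _ = ((Fintype.card U).factorial : ℝ)⁻¹ *
          ∑ k ∈ range (Fintype.card U + 1), ∑ u₁ ∈ range (Fintype.card U + 1),
            ∑ u₂ ∈ range (Fintype.card U + 1), sK f f k u₁ u₂ *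
              ((∏ i, (fiberSizes (Fintype.card U) (k, u₁, u₂) i).factorial : ℕ) *
                sK g g k u₁ u₂) := by
        simp only [sum_perm_image_inv (fun V' W' => hatC g V' * hatC g W')]
        rw [sum_mul_pairType (fun V W => hatC f V * hatC f W)
          (fun t => (∏ i, (fiberSizes (Fintype.card U) t i).factorial : ℕ) *
            ∑ p ∈ univ.filter (fun p : Finset U × Finset U => pairType p.1 p.2 = t),
              hatC g p.1 * hatC g p.2)]
        simp only [sK_eq_sum_pairType]
    _ = _ := by
        simp only [mul_sum, prod_factorial_fiberSizes]
        refine sum_congr rfl fun k _ => sum_congr rfl fun u₁ _ => sum_congr rfl fun u₂ _ => ?_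
        split_ifs with h
        · rw [div_eq_inv_mul]; ring
        · rw [sK_eq_zero_of_lt f f (not_le.1 h)]; ring
end
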